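/- Abstract discrete energy conservation for the θ-scheme: Suppose H₁, H₂ are real inner product spaces, B : H₁ → H₂ is a linear map, and sequences (U^n) in H₁, (P^n) in H₂ satisfy for all n ≥ 1 and all v ∈ H₁: ⟨∂̄_tt U^n, v⟩ + ⟨P^{n;θ}, B v⟩ = 0, and for all n ≥ 0 and all w ∈ H₂: ⟨P^{n+1/2}, w⟩ = ⟨B U^{n+1/2}, w⟩. Then the discrete energy E^{n+1/2} := (1/2)[ ‖∂̄_t U^{n+1/2}‖² + Δt²(θ - 1/4) ‖∂̄_t P^{n+1/2}‖² + ‖P^{n+1/2}‖² ] satisfies E^{n+1/2} = E^{n-1/2} for all n ≥ 1. -/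

import Mathlib

/-!
Testing the momentum equation at step `n` with the central difference `U^{n+1} - U^{n-1}` turns
the second difference into a difference of squared velocities, and turns the `θ`-average of `P`
into a difference of the remaining two energy terms, provided `B (U^{n+1} - U^{n-1})` can be
replaced by `P^{n+1} - P^{n-1}`. That replacement is the constraint equation at steps `n` and
`n - 1`, subtracted and tested with `P^{n;θ}`.
-/

open RealInnerProductSpace

lemma norm_smul_sq_eq {E : Type*} [SeminormedAddCommGroup E] [NormedSpace ℝ E] (c : ℝ) (x : E) :
    ‖c • x‖ ^ 2 = c ^ 2 * ‖x‖ ^ 2 := by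
  rw [norm_smul, mul_pow, Real.norm_eq_abs, sq_abs]

section

variable {H₁ H₂ : Type*}
  [NormedAddCommGroup H₁] [InnerProductSpace ℝ H₁]
  [NormedAddCommGroup H₂] [InnerProductSpace ℝ H₂]

/-- `E^{n+1/2}` computed from `U^n, U^{n+1}, P^n, P^{n+1}`. -/
noncomputable def thetaEnergy (Δt θ : ℝ) (u₀ u₁ : H₁) (p₀ p₁ : H₂) : ℝ :=
  (1 / 2) * (‖Δt⁻¹ • (u₁ - u₀)‖ ^ 2 + Δt ^ 2 * (θ - 1 / 4) * ‖Δt⁻¹ • (p₁ - p₀)‖ ^ 2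
    + ‖(1 / 2 : ℝ) • (p₁ + p₀)‖ ^ 2)

lemma inner_secondDiff_centralDiff (u₀ u₁ u₂ : H₁) :
    ⟪u₂ - (2 : ℝ) • u₁ + u₀, u₂ - u₀⟫ = ‖u₂ - u₁‖ ^ 2 - ‖u₁ - u₀‖ ^ 2 := by
  rw [← real_inner_self_eq_norm_sq, ← real_inner_self_eq_norm_sq]
  simp only [inner_sub_left, inner_sub_right, inner_add_left, real_inner_smul_left]
  linear_combination real_inner_comm u₂ u₀ + real_inner_comm u₁ u₂ + real_inner_comm u₀ u₁

lemma inner_thetaAverage_centralDiff (θ : ℝ) (p₀ p₁ p₂ : H₂) :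
    ⟪θ • p₂ + (1 - 2 * θ) • p₁ + θ • p₀, p₂ - p₀⟫
      = (θ - 1 / 4) * (‖p₂ - p₁‖ ^ 2 - ‖p₁ - p₀‖ ^ 2)
        + (1 / 4) * (‖p₂ + p₁‖ ^ 2 - ‖p₁ + p₀‖ ^ 2) := by
  rw [real_inner_comm, ← real_inner_self_eq_norm_sq, ← real_inner_self_eq_norm_sq,
    ← real_inner_self_eq_norm_sq, ← real_inner_self_eq_norm_sq]
  simp only [inner_sub_left, inner_sub_right, inner_add_left, inner_add_right,
    real_inner_smul_right]
  linear_combination (θ - 1 / 2) * real_inner_comm p₂ p₁ - θ * real_inner_comm p₂ p₀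
    + (θ - 1 / 2) * real_inner_comm p₁ p₀

lemma thetaEnergy_sub {Δt : ℝ} (hΔt : Δt ≠ 0) (θ : ℝ) (u₀ u₁ u₂ : H₁) (p₀ p₁ p₂ : H₂) :
    thetaEnergy Δt θ u₁ u₂ p₁ p₂ - thetaEnergy Δt θ u₀ u₁ p₀ p₁
      = (1 / 2) * (⟪(Δt ^ 2)⁻¹ • (u₂ - (2 : ℝ) • u₁ + u₀), u₂ - u₀⟫
        + ⟪θ • p₂ + (1 - 2 * θ) • p₁ + θ • p₀, p₂ - p₀⟫) := by
  have hΔt2 : Δt ^ 2 * (Δt ^ 2)⁻¹ = 1 := mul_inv_cancel₀ (pow_ne_zero 2 hΔt)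
  rw [real_inner_smul_left, inner_secondDiff_centralDiff, inner_thetaAverage_centralDiff]
  simp only [thetaEnergy, norm_smul_sq_eq, inv_pow]
  linear_combination (1 / 2) * (θ - 1 / 4) * (‖p₂ - p₁‖ ^ 2 - ‖p₁ - p₀‖ ^ 2) * hΔt2

lemma inner_sub_eq_inner_map_sub_of_average_eq (B : H₁ →ₗ[ℝ] H₂) {u₀ u₁ u₂ : H₁} {p₀ p₁ p₂ : H₂}
    {w : H₂} (h₁₂ : ⟪(1 / 2 : ℝ) • (p₂ + p₁), w⟫ = ⟪B ((1 / 2 : ℝ) • (u₂ + u₁)), w⟫)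
    (h₀₁ : ⟪(1 / 2 : ℝ) • (p₁ + p₀), w⟫ = ⟪B ((1 / 2 : ℝ) • (u₁ + u₀)), w⟫) :
    ⟪p₂ - p₀, w⟫ = ⟪B (u₂ - u₀), w⟫ := by
  simp only [map_smul, map_add, map_sub, real_inner_smul_left, inner_add_left,
    inner_sub_left] at h₁₂ h₀₁ ⊢
  linarith

end

theorem discrete_energy_conservation_theta_scheme
    {H₁ H₂ : Type*}
    [NormedAddCommGroup H₁] [InnerProductSpace ℝ H₁]
    [NormedAddCommGroup H₂] [InnerProductSpace ℝ H₂]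
    (B : H₁ →ₗ[ℝ] H₂) (Δt : ℝ) (hΔt : 0 < Δt) (θ : ℝ)
    (U : ℤ → H₁) (P : ℤ → H₂)
    (h1 : ∀ n : ℤ, 1 ≤ n → ∀ v : H₁,
      ⟪(Δt ^ 2)⁻¹ • (U (n + 1) - (2 : ℝ) • U n + U (n - 1)), v⟫
        + ⟪θ • P (n + 1) + (1 - 2 * θ) • P n + θ • P (n - 1), B v⟫ = 0)
    (h2 : ∀ n : ℤ, 0 ≤ n → ∀ w : H₂,
      ⟪(1 / 2 : ℝ) • (P (n + 1) + P n), w⟫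
        = ⟪B ((1 / 2 : ℝ) • (U (n + 1) + U n)), w⟫)
    (E : ℤ → ℝ)
    (hE : ∀ n : ℤ, E n = (1 / 2) *
      (‖Δt⁻¹ • (U (n + 1) - U n)‖ ^ 2
        + Δt ^ 2 * (θ - 1 / 4) * ‖Δt⁻¹ • (P (n + 1) - P n)‖ ^ 2
        + ‖(1 / 2 : ℝ) • (P (n + 1) + P n)‖ ^ 2)) :
    ∀ n : ℤ, 1 ≤ n → E n = E (n - 1) := by
  intro n hn
  have hE' : ∀ m, E m = thetaEnergy Δt θ (U m) (U (m + 1)) (P m) (P (m + 1)) := hE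
  have hprev : n - 1 + 1 = n := by ring
  set Q := θ • P (n + 1) + (1 - 2 * θ) • P n + θ • P (n - 1)
  have hconstr_prev := h2 (n - 1) (by omega) Q
  rw [hprev] at hconstr_prev
  have hconstr : ⟪P (n + 1) - P (n - 1), Q⟫ = ⟪B (U (n + 1) - U (n - 1)), Q⟫ :=
    inner_sub_eq_inner_map_sub_of_average_eq B (h2 n (by omega) Q) hconstr_prev
  rw [hE', hE', hprev, ← sub_eq_zero, thetaEnergy_sub hΔt.ne',
    real_inner_comm (P (n + 1) - P (n - 1)), hconstr, real_inner_comm Q, h1 n hn, mul_zero]
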